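/- arXiv:2105.07038 — 4 statements merged into one kernel-verified Lean document; each statement's English description precedes it below -/
import Mathlib

section
/- Let k ≥ 2 and let a_1,...,a_k and b_1,...,b_k be positive integers with b_i ≥ a_i for every i. If there exists a 2-coloring of the edges of the complete multipartite graph K_{a_1,...,a_k} admitting no cover of its vertex set by two monochromatic subgraphs each of diameter at most 2, then there also exists such a 2-coloring of K_{b_1,...,b_k}. Equivalently, if D_2^2(K_{a_1,...,a_k}) ≥ 3 then D_2^2(K_{b_1,...,b_k}) ≥ 3. -/
open SimpleGraph

/-- The spanning subgraph of `G` consisting of the edges that receive color `b`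
under the edge-coloring `c`. -/
def SimpleGraph.colorSubgraph {V : Type*} (G : SimpleGraph V) (c : Sym2 V → Bool) (b : Bool) :
    SimpleGraph V where
  Adj u v := G.Adj u v ∧ c s(u, v) = b
  symm := ⟨fun u v h => ⟨h.1.symm, by rw [Sym2.eq_swap]; exact h.2⟩⟩
  loopless := ⟨fun u h => G.loopless.irrefl u h.1⟩

/-- There are two monochromatic connected subgraphs, each of diameter at most `d`,
whose vertex sets together cover all of `V`. -/
def HasMonoCover {V : Type*} (G : SimpleGraph V) (c : Sym2 V → Bool) (d : ℕ) : Prop :=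
  ∃ (S₁ S₂ : Set V) (b₁ b₂ : Bool),
    (SimpleGraph.induce S₁ (G.colorSubgraph c b₁)).Connected ∧
    (SimpleGraph.induce S₁ (G.colorSubgraph c b₁)).ediam ≤ (d : ℕ∞) ∧
    (SimpleGraph.induce S₂ (G.colorSubgraph c b₂)).Connected ∧
    (SimpleGraph.induce S₂ (G.colorSubgraph c b₂)).ediam ≤ (d : ℕ∞) ∧
    S₁ ∪ S₂ = Set.univ

/-! Choose surjections `Fin (b i) → Fin (a i)`. Together they give a surjective homomorphism
`K_{b_1,…,b_k} →g K_{a_1,…,a_k}`, and the bad coloring of `K_{a_1,…,a_k}` pulls back along it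
to a bad coloring of `K_{b_1,…,b_k}`: a homomorphism does not increase distances, so the image
of a monochromatic cover of diameter `≤ d` upstairs would be one downstairs. -/

namespace SimpleGraph

variable {V W : Type*} {G : SimpleGraph V} {H : SimpleGraph W}

theorem Hom.edist_map_le (φ : G →g H) (u v : V) : H.edist (φ u) (φ v) ≤ G.edist u v := by
  by_cases hr : G.Reachable u v
  · obtain ⟨p, hp⟩ := hr.exists_walk_length_eq_edist
    rw [← hp, ← Walk.length_map φ]
    exact edist_le _
  · exact edist_eq_top_of_not_reachable hr ▸ le_top

theorem Hom.ediam_le_of_surjective (φ : G →g H) (hφ : Function.Surjective φ) :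
    H.ediam ≤ G.ediam :=
  ediam_le_of_edist_le <| hφ.forall₂.2 fun u v ↦ (φ.edist_map_le u v).trans edist_le_ediam

def Hom.inducedColorSubgraph (φ : G →g H) (c : Sym2 W → Bool) (b : Bool) (S : Set V) :
    (G.colorSubgraph (c ∘ Sym2.map φ) b).induce S →g (H.colorSubgraph c b).induce (φ '' S) where
  toFun u := ⟨φ u, Set.mem_image_of_mem φ u.2⟩
  map_rel' h := ⟨φ.map_adj h.1, h.2⟩

theorem Hom.inducedColorSubgraph_surjective (φ : G →g H) (c : Sym2 W → Bool) (b : Bool)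
    (S : Set V) : Function.Surjective (φ.inducedColorSubgraph c b S) := by
  rintro ⟨_, u, hu, rfl⟩
  exact ⟨⟨u, hu⟩, rfl⟩

theorem HasMonoCover.of_comap {φ : G →g H} (hφ : Function.Surjective φ) {c : Sym2 W → Bool}
    {d : ℕ} (h : HasMonoCover G (c ∘ Sym2.map φ) d) : HasMonoCover H c d := by
  obtain ⟨S₁, S₂, b₁, b₂, hc₁, hd₁, hc₂, hd₂, hcov⟩ := h
  have hsurj₁ := φ.inducedColorSubgraph_surjective c b₁ S₁
  have hsurj₂ := φ.inducedColorSubgraph_surjective c b₂ S₂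
  refine ⟨φ '' S₁, φ '' S₂, b₁, b₂, hc₁.map _ hsurj₁,
    (Hom.ediam_le_of_surjective _ hsurj₁).trans hd₁, hc₂.map _ hsurj₂,
    (Hom.ediam_le_of_surjective _ hsurj₂).trans hd₂, ?_⟩
  rw [← Set.image_union, hcov, Set.image_univ, hφ.range_eq]

end SimpleGraph

def completeMultipartiteGraph.sigmaMapHom {ι : Type*} {α β : ι → Type*} (f : ∀ i, α i → β i) :
    completeMultipartiteGraph α →g completeMultipartiteGraph β where
  toFun := Sigma.map id f
  map_rel' h := h

theorem Fin.exists_surjective_of_le {m n : ℕ} (hm : 0 < m) (hmn : m ≤ n) :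
    ∃ f : Fin n → Fin m, Function.Surjective f :=
  haveI : Nonempty (Fin m) := ⟨⟨0, hm⟩⟩
  ⟨_, Function.invFun_surjective (Fin.castLE_injective hmn)⟩

theorem stmt3_general (k : ℕ) (a b : Fin k → ℕ)
    (ha : ∀ i, 1 ≤ a i) (hab : ∀ i, a i ≤ b i)
    (h : ∃ col : Sym2 (Σ i : Fin k, Fin (a i)) → Bool,
      ¬ HasMonoCover (completeMultipartiteGraph (fun i : Fin k => Fin (a i))) col 2) :
    ∃ col : Sym2 (Σ i : Fin k, Fin (b i)) → Bool,
      ¬ HasMonoCover (completeMultipartiteGraph (fun i : Fin k => Fin (b i))) col 2 := by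
  obtain ⟨col, hcol⟩ := h
  choose f hf using fun i ↦ Fin.exists_surjective_of_le (ha i) (hab i)
  let φ := completeMultipartiteGraph.sigmaMapHom f
  have hφ : Function.Surjective φ := Function.surjective_id.sigma_map hf
  exact ⟨col ∘ Sym2.map φ, mt (HasMonoCover.of_comap hφ) hcol⟩

theorem stmt3 (k : ℕ) (hk : 2 ≤ k) (a b : Fin k → ℕ)
    (ha : ∀ i, 1 ≤ a i) (hab : ∀ i, a i ≤ b i)
    (h : ∃ col : Sym2 (Σ i : Fin k, Fin (a i)) → Bool,
      ¬ HasMonoCover (completeMultipartiteGraph (fun i : Fin k => Fin (a i))) col 2) :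
    ∃ col : Sym2 (Σ i : Fin k, Fin (b i)) → Bool,
      ¬ HasMonoCover (completeMultipartiteGraph (fun i : Fin k => Fin (b i))) col 2 :=
  stmt3_general k a b ha hab h
end

section
/- Let a ≥ b ≥ c ≥ 1 be integers. Then D_2^2(K_{a,b,c}) = 1 if and only if (a,b,c) = (1,1,1) or (a,b,c) = (2,1,1); that is, every 2-coloring of the edges of K_{a,b,c} admits two monochromatic subgraphs, each of diameter at most 1, whose vertex sets cover all vertices, if and only if (a,b,c) ∈ {(1,1,1), (2,1,1)}. -/
open SimpleGraph

/-! A monochromatic subgraph of diameter at most one is a nonempty monochromatic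
clique, and a clique of `K_{a,b,c}` meets every part at most once. Two cliques therefore cover
at most two vertices of each part, which rules out `a ≥ 3`. For `a = b = 2`, color `true` exactly
the edges meeting the first part: the clique through a vertex of the third part must also
contain a vertex of each of the first two parts, and this triangle has both colors. Conversely
`K_{1,1,1}` and `K_{2,1,1}` are covered by two edges, each of which is a monochromatic clique. -/

namespace SimpleGraph

variable {α : Type*}

lemma ediam_le_one_iff_eq_top {G : SimpleGraph α} : G.ediam ≤ 1 ↔ G = ⊤ := by
  rcases subsingleton_or_nontrivial α with hα | hα
  · simp only [ediam_eq_zero_of_subsingleton, zero_le, true_iff]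
    ext u v
    simp [Subsingleton.elim u v]
  · rw [← ediam_eq_one, le_iff_lt_or_eq, Order.lt_one_iff]
    exact or_iff_right ediam_ne_zero

lemma connected_induce_and_ediam_le_one_iff {G : SimpleGraph α} {S : Set α} :
    ((G.induce S).Connected ∧ (G.induce S).ediam ≤ 1) ↔ S.Nonempty ∧ G.IsClique S := by
  rw [ediam_le_one_iff_eq_top, induce_eq_top, ← Set.nonempty_coe_sort]
  constructor
  · rintro ⟨hconn, hclique⟩
    exact ⟨hconn.nonempty, hclique⟩
  · rintro ⟨hne, hclique⟩
    refine ⟨?_, hclique⟩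
    rw [induce_eq_top.mpr hclique]
    exact connected_top

lemma colorSubgraph_le (G : SimpleGraph α) (c : Sym2 α → Bool) (b : Bool) :
    G.colorSubgraph c b ≤ G :=
  fun _ _ h => h.1

end SimpleGraph

lemma hasMonoCover_one_iff {V : Type*} (G : SimpleGraph V) (c : Sym2 V → Bool) :
    HasMonoCover G c 1 ↔ ∃ (S₁ S₂ : Set V) (b₁ b₂ : Bool),
      S₁.Nonempty ∧ (G.colorSubgraph c b₁).IsClique S₁ ∧
      S₂.Nonempty ∧ (G.colorSubgraph c b₂).IsClique S₂ ∧ S₁ ∪ S₂ = Set.univ := by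
  simp only [HasMonoCover, Nat.cast_one, ← and_assoc, connected_induce_and_ediam_le_one_iff]

lemma hasMonoCover_one_of_adj_of_adj {V : Type*} {G : SimpleGraph V} (c : Sym2 V → Bool)
    {u v x y : V} (huv : G.Adj u v) (hxy : G.Adj x y)
    (hcov : ({u, v} : Set V) ∪ {x, y} = Set.univ) : HasMonoCover G c 1 :=
  (hasMonoCover_one_iff G c).mpr ⟨{u, v}, {x, y}, c s(u, v), c s(x, y),
    Set.insert_nonempty _ _, isClique_pair.mpr fun _ => ⟨huv, rfl⟩,
    Set.insert_nonempty _ _, isClique_pair.mpr fun _ => ⟨hxy, rfl⟩, hcov⟩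

section Multipartite

variable {ι : Type*} {V : ι → Type*}

lemma SimpleGraph.IsClique.injOn_fst_of_completeMultipartiteGraph {S : Set (Σ i, V i)}
    (hS : (completeMultipartiteGraph V).IsClique S) : S.InjOn Sigma.fst :=
  fun _ hx _ hy hfst => by_contra fun hne => hS hx hy hne hfst

lemma fiber_subsingleton_of_injOn_fst {S : Set (Σ i, V i)} (hS : S.InjOn Sigma.fst) (i : ι) :
    {y : V i | (⟨i, y⟩ : Σ i, V i) ∈ S}.Subsingleton :=
  fun _ hy _ hz => by simpa using hS hy hz rfl

lemma card_le_two_of_union_eq_univ_of_injOn_fst {S T : Set (Σ i, V i)}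
    (hcov : S ∪ T = Set.univ) (hS : S.InjOn Sigma.fst) (hT : T.InjOn Sigma.fst)
    (i : ι) [Finite (V i)] : Nat.card (V i) ≤ 2 := by
  have hfibers : {y : V i | (⟨i, y⟩ : Σ i, V i) ∈ S} ∪ {y | ⟨i, y⟩ ∈ T} = Set.univ := by
    ext y
    simpa using congrArg (⟨i, y⟩ ∈ ·) hcov
  calc Nat.card (V i)
      = (Set.univ : Set (V i)).ncard := Set.ncard_univ _ |>.symm
    _ ≤ {y : V i | (⟨i, y⟩ : Σ i, V i) ∈ S}.ncard + {y | ⟨i, y⟩ ∈ T}.ncard :=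
        hfibers ▸ Set.ncard_union_le _ _
    _ ≤ 1 + 1 := by
        gcongr <;> exact Set.ncard_le_one_iff_subsingleton.mpr
          (fiber_subsingleton_of_injOn_fst ‹_› i)

lemma exists_mem_of_union_eq_univ_of_injOn_fst {S T : Set (Σ i, V i)}
    (hcov : S ∪ T = Set.univ) (hT : T.InjOn Sigma.fst) (i : ι) [Nontrivial (V i)] :
    ∃ y : V i, ⟨i, y⟩ ∈ S := by
  obtain ⟨y, z, hyz⟩ := exists_pair_ne (V i)
  by_contra! hS
  have hmemT : ∀ y : V i, (⟨i, y⟩ : Σ i, V i) ∈ T := fun y =>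
    ((Set.eq_univ_iff_forall.mp hcov) ⟨i, y⟩).resolve_left (hS y)
  exact hyz (fiber_subsingleton_of_injOn_fst hT i (hmemT y) (hmemT z))

variable [DecidableEq ι]

def incidentPartColoring (i₀ : ι) : Sym2 (Σ i, V i) → Bool :=
  Sym2.lift ⟨fun u v => decide (u.1 = i₀ ∨ v.1 = i₀), fun _ _ => by simp only [or_comm]⟩

lemma not_isClique_incidentPartColoring (G : SimpleGraph (Σ i, V i)) {i₀ : ι} {b : Bool}
    {S : Set (Σ i, V i)} (hS : (G.colorSubgraph (incidentPartColoring i₀) b).IsClique S)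
    {u v w : Σ i, V i} (hu : u ∈ S) (hv : v ∈ S) (hw : w ∈ S)
    (hu₀ : u.1 = i₀) (hv₀ : v.1 ≠ i₀) (hw₀ : w.1 ≠ i₀) (hvw : v ≠ w) : False := by
  have hred : incidentPartColoring i₀ s(u, v) = b := (hS hu hv (by rintro rfl; exact hv₀ hu₀)).2
  have hblue : incidentPartColoring i₀ s(v, w) = b := (hS hv hw hvw).2
  simp only [incidentPartColoring, Sym2.lift_mk] at hred hblue
  simp [hu₀, hv₀, hw₀, ← hred] at hblue

lemma not_cover_incidentPartColoring {i₀ i₁ i₂ : ι} (h₀₁ : i₀ ≠ i₁) (h₀₂ : i₀ ≠ i₂)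
    (h₁₂ : i₁ ≠ i₂) [Nontrivial (V i₀)] [Nontrivial (V i₁)] (x : V i₂)
    {S T : Set (Σ i, V i)} {bS bT : Bool}
    (hS : ((completeMultipartiteGraph V).colorSubgraph (incidentPartColoring i₀) bS).IsClique S)
    (hT : ((completeMultipartiteGraph V).colorSubgraph (incidentPartColoring i₀) bT).IsClique T)
    (hcov : S ∪ T = Set.univ) : False := by
  wlog hx : ⟨i₂, x⟩ ∈ S generalizing S T bS bT
  · exact this hT hS (Set.union_comm S T ▸ hcov)
      (((Set.eq_univ_iff_forall.mp hcov) ⟨i₂, x⟩).resolve_left hx)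
  have hTinj := (hT.mono (colorSubgraph_le _ _ _)).injOn_fst_of_completeMultipartiteGraph
  obtain ⟨y₀, hy₀⟩ := exists_mem_of_union_eq_univ_of_injOn_fst hcov hTinj i₀
  obtain ⟨y₁, hy₁⟩ := exists_mem_of_union_eq_univ_of_injOn_fst hcov hTinj i₁
  exact not_isClique_incidentPartColoring _ hS hy₀ hy₁ hx rfl h₀₁.symm h₀₂.symm
    (fun h => h₁₂ (congrArg Sigma.fst h))

end Multipartite

theorem stmt8 (a b c : ℕ) (hab : b ≤ a) (hbc : c ≤ b) (hc : 1 ≤ c) :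
    (∀ col : Sym2 (Σ i : Fin 3, Fin (![a, b, c] i)) → Bool,
      HasMonoCover (completeMultipartiteGraph (fun i : Fin 3 => Fin (![a, b, c] i))) col 1) ↔
    ((a = 1 ∧ b = 1 ∧ c = 1) ∨ (a = 2 ∧ b = 1 ∧ c = 1)) := by
  constructor
  · intro hAll
    obtain ⟨S₁, S₂, b₁, b₂, -, h₁, -, h₂, hcov⟩ :=
      (hasMonoCover_one_iff _ _).mp (hAll (incidentPartColoring 0))
    have ha : a ≤ 2 := by
      simpa using card_le_two_of_union_eq_univ_of_injOn_fst hcov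
        (h₁.mono (colorSubgraph_le _ _ _)).injOn_fst_of_completeMultipartiteGraph
        (h₂.mono (colorSubgraph_le _ _ _)).injOn_fst_of_completeMultipartiteGraph 0
    by_contra hbad
    obtain ⟨rfl, rfl⟩ : a = 2 ∧ b = 2 := by omega
    have : Nontrivial (Fin (![2, 2, c] 0)) := Fin.nontrivial_iff_two_le.mpr le_rfl
    have : Nontrivial (Fin (![2, 2, c] 1)) := Fin.nontrivial_iff_two_le.mpr le_rfl
    exact not_cover_incidentPartColoring (i₁ := 1) (i₂ := 2) (by decide) (by decide) (by decide)
      (⟨0, hc⟩ : Fin c) h₁ h₂ hcov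
  · rintro (⟨rfl, rfl, rfl⟩ | ⟨rfl, rfl, rfl⟩) <;> intro col
    · refine hasMonoCover_one_of_adj_of_adj col (u := ⟨0, ⟨0, by decide⟩⟩)
        (v := ⟨1, ⟨0, by decide⟩⟩) (x := ⟨0, ⟨0, by decide⟩⟩)
        (y := ⟨2, ⟨0, by decide⟩⟩) (by simp) (by simp) ?_
      ext ⟨i, k⟩
      fin_cases i <;> fin_cases k <;> simp
    · refine hasMonoCover_one_of_adj_of_adj col (u := ⟨0, ⟨0, by decide⟩⟩)
        (v := ⟨1, ⟨0, by decide⟩⟩) (x := ⟨0, ⟨1, by decide⟩⟩)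
        (y := ⟨2, ⟨0, by decide⟩⟩) (by simp) (by simp) ?_
      ext ⟨i, k⟩
      fin_cases i <;> fin_cases k <;> simp
end

section
/- There exists a 2-coloring of the edges of the complete tripartite graph K_{2,2,1} (namely, color red all edges incident with the vertex in the part of size 1 and color all other edges blue) under which no two monochromatic subgraphs, each of diameter at most 1, have vertex sets covering all five vertices. Equivalently, D_2^2(K_{2,2,1}) ≥ 2. -/
open SimpleGraph

/-! Under the coloring that makes exactly the edges at the apex red, the red graph is a star and
the blue graph is `K₂,₂`; both are triangle-free, so a monochromatic clique has at most two
vertices and two of them cover at most four of the five vertices. -/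

namespace SimpleGraph

variable {V : Type*}

theorem isClique_of_ediam_induce_le_one {G : SimpleGraph V} {s : Set V}
    (h : (G.induce s).ediam ≤ 1) : G.IsClique s := by
  intro u hu v hv huv
  have huv' : (⟨u, hu⟩ : s) ≠ ⟨v, hv⟩ := fun h ↦ huv (congrArg Subtype.val h)
  simpa [huv'] using edist_le_one_iff_adj_or_eq.mp (ediam_le_iff.mp h ⟨u, hu⟩ ⟨v, hv⟩)

theorem IsClique.ncard_lt_of_cliqueFree {G : SimpleGraph V} {s : Set V} {n : ℕ}
    (hs : s.Finite) (hG : G.CliqueFree n) (h : G.IsClique s) : s.ncard < n := by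
  by_contra! hn
  obtain ⟨t, hts, rfl⟩ := Set.exists_subset_card_eq hn
  have ht : t.Finite := hs.subset hts
  exact hG ht.toFinset ⟨by simpa using h.subset hts, (Set.ncard_eq_toFinset_card t ht).symm⟩

theorem not_hasMonoCover_one_of_cliqueFree_three [Finite V] {G : SimpleGraph V}
    {c : Sym2 V → Bool} (hc : ∀ b, (G.colorSubgraph c b).CliqueFree 3) (hV : 4 < Nat.card V) :
    ¬ HasMonoCover G c 1 := by
  rintro ⟨S₁, S₂, b₁, b₂, -, hd₁, -, hd₂, hcover⟩
  have h₁ := (isClique_of_ediam_induce_le_one hd₁).ncard_lt_of_cliqueFree S₁.toFinite (hc b₁)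
  have h₂ := (isClique_of_ediam_induce_le_one hd₂).ncard_lt_of_cliqueFree S₂.toFinite (hc b₂)
  exact Set.union_ne_univ_of_ncard_add_ncard_lt (by omega) hcover

def apexColoring [DecidableEq V] (z : V) (e : Sym2 V) : Bool := decide (z ∈ e)

theorem cliqueFree_three_colorSubgraph_apexColoring_true [DecidableEq V] (G : SimpleGraph V)
    (z : V) : (G.colorSubgraph (apexColoring z) true).CliqueFree 3 := by
  intro t ht
  obtain ⟨a, b, c, ⟨hab, hzab⟩, ⟨hac, hzac⟩, ⟨hbc, hzbc⟩, -⟩ := is3Clique_iff.mp ht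
  simp only [apexColoring, decide_eq_true_eq, Sym2.mem_iff] at hzab hzac hzbc
  grind [hab.ne, hac.ne, hbc.ne]

end SimpleGraph

local notation "K₂₂₁" => completeMultipartiteGraph (fun i : Fin 3 => Fin (![2, 2, 1] i))

theorem cliqueFree_three_colorSubgraph_apexColoring (b : Bool) :
    ((K₂₂₁).colorSubgraph (apexColoring ⟨2, (0 : Fin 1)⟩) b).CliqueFree 3 := by
  cases b with
  | true => exact cliqueFree_three_colorSubgraph_apexColoring_true _ _
  | false =>
    intro t ht
    obtain ⟨u, v, w, huv, huw, hvw, -⟩ := is3Clique_iff.mp ht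
    simp only [colorSubgraph, apexColoring, comap_adj, top_adj] at huv huw hvw
    revert u v w
    decide

theorem stmt10 :
    ∃ col : Sym2 (Σ i : Fin 3, Fin (![2, 2, 1] i)) → Bool,
      ¬ HasMonoCover (completeMultipartiteGraph (fun i : Fin 3 => Fin (![2, 2, 1] i))) col 1 := by
  refine ⟨apexColoring ⟨2, (0 : Fin 1)⟩,
    not_hasMonoCover_one_of_cliqueFree_three cliqueFree_three_colorSubgraph_apexColoring ?_⟩
  rw [Nat.card_eq_fintype_card]
  decide
end

section
/- Let k ≥ 2 and let G_k be the complete multipartite graph with k parts each of size 2. Let c be a 2-coloring of the edges of G_k such that no two monochromatic subgraphs, each of diameter at most 2, have vertex sets covering all of V(G_k). Then for every vertex v of G_k, with clone v' (the unique vertex not adjacent to v), and for every pair of colors (i,j) ∈ {1,2}², there exists a vertex w ∉ {v, v'} such that the edge vw has color i and the edge v'w has color j. In particular, v and v' are joined by paths of length 2 of every possible color pattern. -/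
open SimpleGraph

/-- The clone of a vertex of the complete multipartite graph with parts of size `2`:
the unique other vertex in its own part. -/
def clone {k : ℕ} (v : Σ _ : Fin k, Fin 2) : Σ _ : Fin k, Fin 2 :=
  ⟨v.1, v.2 + 1⟩

/-! Let `v'` be the clone of `v`; every other vertex is adjacent to both. If no vertex `w` sees `v`
in color `i` and `v'` in color `j`, then each such `w` lies in the color-`¬i` star at `v` or in
the color-`¬j` star at `v'`. These two monochromatic stars have diameter at most `2` and cover
the graph. -/

namespace SimpleGraph

variable {V : Type*} (G : SimpleGraph V)

lemma ediam_le_two_of_forall_adj {u : V} (hu : ∀ v, u ≠ v → G.Adj u v) : G.ediam ≤ 2 :=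
  calc G.ediam ≤ 2 * G.eccent u := G.ediam_le_two_mul_eccent u
    _ ≤ 2 * 1 := by gcongr; exact (G.eccent_le_one_iff u).2 hu
    _ = 2 := mul_one 2

lemma connected_of_forall_adj {u : V} (hu : ∀ v, u ≠ v → G.Adj u v) : G.Connected :=
  haveI : Nonempty V := ⟨u⟩
  G.connected_of_ediam_ne_top <| ne_top_of_le_ne_top (by decide) (G.ediam_le_two_of_forall_adj hu)

def colorStar (c : Sym2 V → Bool) (v : V) (b : Bool) : Set V :=
  insert v {w | G.Adj v w ∧ c s(v, w) = b}

variable {G}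

lemma forall_adj_induce_colorStar (c : Sym2 V → Bool) (v : V) (b : Bool) :
    ∀ w, ⟨v, Set.mem_insert v _⟩ ≠ w → ((G.colorSubgraph c b).induce (G.colorStar c v b)).Adj
      ⟨v, Set.mem_insert v _⟩ w := by
  rintro ⟨w, rfl | hw⟩ hne
  · exact absurd rfl hne
  · exact hw

lemma hasMonoCover_of_colorStar_union_eq_univ {c : Sym2 V → Bool} {v v' : V} {b b' : Bool}
    (h : G.colorStar c v b ∪ G.colorStar c v' b' = Set.univ) : HasMonoCover G c 2 :=
  ⟨_, _, b, b', connected_of_forall_adj _ (forall_adj_induce_colorStar c v b),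
    ediam_le_two_of_forall_adj _ (forall_adj_induce_colorStar c v b),
    connected_of_forall_adj _ (forall_adj_induce_colorStar c v' b'),
    ediam_le_two_of_forall_adj _ (forall_adj_induce_colorStar c v' b'), h⟩

lemma colorStar_union_colorStar_eq_univ {c : Sym2 V → Bool} {v v' : V} {i j : Bool}
    (hadj : ∀ w, w ≠ v → w ≠ v' → G.Adj v w ∧ G.Adj v' w)
    (hno : ∀ w, w ≠ v → w ≠ v' → c s(v, w) = i → c s(v', w) ≠ j) :
    G.colorStar c v (!i) ∪ G.colorStar c v' (!j) = Set.univ := by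
  refine Set.eq_univ_of_forall fun w ↦ ?_
  by_cases hwv : w = v
  · exact Or.inl (Or.inl hwv)
  by_cases hwv' : w = v'
  · exact Or.inr (Or.inl hwv')
  obtain ⟨hv, hv'⟩ := hadj w hwv hwv'
  by_cases hi : c s(v, w) = i
  · exact Or.inr (Or.inr ⟨hv', Bool.eq_not.2 (hno w hwv hwv' hi)⟩)
  · exact Or.inl (Or.inr ⟨hv, Bool.eq_not.2 hi⟩)

end SimpleGraph

lemma adj_and_adj_clone_of_ne_of_ne_clone {k : ℕ} {v w : Σ _ : Fin k, Fin 2} (hv : w ≠ v)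
    (hv' : w ≠ clone v) :
    (completeMultipartiteGraph fun _ : Fin k => Fin 2).Adj v w ∧
      (completeMultipartiteGraph fun _ : Fin k => Fin 2).Adj (clone v) w := by
  obtain ⟨a, x⟩ := v
  obtain ⟨b, y⟩ := w
  suffices a ≠ b from ⟨this, this⟩
  rintro rfl
  simp only [clone, ne_eq, Sigma.mk.injEq, heq_eq_eq, true_and] at hv hv'
  revert x y
  decide

theorem stmt15_general (k : ℕ)
    (col : Sym2 (Σ _ : Fin k, Fin 2) → Bool)
    (h : ¬ HasMonoCover (completeMultipartiteGraph (fun _ : Fin k => Fin 2)) col 2)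
    (v : Σ _ : Fin k, Fin 2) (i j : Bool) :
    ∃ w : Σ _ : Fin k, Fin 2, w ≠ v ∧ w ≠ clone v ∧
      col s(v, w) = i ∧ col s(clone v, w) = j := by
  by_contra hno
  push Not at hno
  exact h (hasMonoCover_of_colorStar_union_eq_univ
    (colorStar_union_colorStar_eq_univ
      (fun _ ↦ adj_and_adj_clone_of_ne_of_ne_clone) hno))

theorem stmt15 (k : ℕ) (hk : 2 ≤ k)
    (col : Sym2 (Σ _ : Fin k, Fin 2) → Bool)
    (h : ¬ HasMonoCover (completeMultipartiteGraph (fun _ : Fin k => Fin 2)) col 2)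
    (v : Σ _ : Fin k, Fin 2) (i j : Bool) :
    ∃ w : Σ _ : Fin k, Fin 2, w ≠ v ∧ w ≠ clone v ∧
      col s(v, w) = i ∧ col s(clone v, w) = j :=
  stmt15_general k col h v i j
end
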